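/- Let f : ℝ^{n×n} → ℝ be twice continuously differentiable and define g(W_1, W_2) := f(W_2 W_1) for W_1 ∈ ℝ^{k×n}, W_2 ∈ ℝ^{n×k} with k > n. Suppose (W_1, W_2) is a critical point of g (i.e. W_2ᵀ ∇f(W_2 W_1) = 0 and ∇f(W_2 W_1) W_1ᵀ = 0) but W_2 W_1 is not a critical point of f (i.e. ∇f(W_2 W_1) ≠ 0). Then (W_1, W_2) is a strict saddle of g: there exists a direction (M_1, M_2) ∈ ℝ^{k×n} × ℝ^{n×k} such that the second derivative at 0 of the function t ↦ g(W_1 + t M_1, W_2 + t M_2) is strictly negative. -/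

import Mathlib

/-!
Since `k > n`, `W₂` has a nonzero kernel vector `v`. Take `M₂ = eᵢ vᵀ` and `M₁ = s v eⱼᵀ`, where
`∇f(W₂W₁)ᵢⱼ ≠ 0`. As `W₂ M₁ = 0`, the perturbed product is the quadratic curve
`W₂W₁ + t M₂W₁ + t² M₂M₁` with `M₂M₁ = s |v|² eᵢeⱼᵀ`, so the second derivative at `0` equals
`D²f(W₂W₁)[M₂W₁, M₂W₁] + 2 s |v|² ∇f(W₂W₁)ᵢⱼ`: its first term does not depend on `s`, and the
second is linear in `s` with nonzero slope, so a suitable `s` makes it negative.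
-/

open Matrix

noncomputable section

attribute [local instance] Matrix.normedAddCommGroup Matrix.normedSpace

/-- Frobenius inner product. -/
def frobInner {a b : ℕ} (A B : Matrix (Fin a) (Fin b) ℝ) : ℝ := ∑ i, ∑ j, A i j * B i j

section QuadraticCurve

variable {E F : Type*} [NormedAddCommGroup E] [NormedSpace ℝ E]
  [NormedAddCommGroup F] [NormedSpace ℝ F]

theorem hasDerivAt_quadratic_curve (X A B : E) (t : ℝ) :
    HasDerivAt (fun t : ℝ => X + t • A + t ^ 2 • B) (A + (2 * t) • B) t := by
  simpa [mul_comm] using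
    (((hasDerivAt_id t).smul_const A).const_add X).fun_add ((hasDerivAt_pow 2 t).smul_const B)

theorem deriv_deriv_comp_quadratic_curve {f : E → F} (hf : ContDiff ℝ 2 f) (X A B : E) :
    deriv (deriv fun t : ℝ => f (X + t • A + t ^ 2 • B)) 0 =
      fderiv ℝ (fderiv ℝ f) X A A + (2 : ℝ) • fderiv ℝ f X B := by
  set c : ℝ → E := fun t => X + t • A + t ^ 2 • B
  have hc0 : c 0 = X := by simp [c]
  have hf' : ∀ Y, HasFDerivAt f (fderiv ℝ f Y) Y :=
    fun Y => (hf.differentiable two_ne_zero Y).hasFDerivAt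
  have hDf : ∀ Y, HasFDerivAt (fderiv ℝ f) (fderiv ℝ (fderiv ℝ f) Y) Y :=
    fun Y => ((hf.fderiv_right (m := 1) le_rfl).differentiable one_ne_zero Y).hasFDerivAt
  have hderiv : deriv (fun t => f (c t)) = fun t => fderiv ℝ f (c t) (A + (2 * t) • B) :=
    funext fun t => ((hf' (c t)).comp_hasDerivAt t (hasDerivAt_quadratic_curve X A B t)).deriv
  have hDfc : HasDerivAt (fun t => fderiv ℝ f (c t)) (fderiv ℝ (fderiv ℝ f) X A) 0 := by
    have hc' : HasDerivAt c A 0 := by simpa using hasDerivAt_quadratic_curve X A B 0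
    have h := (hDf (c 0)).comp_hasDerivAt 0 hc'
    rw [hc0] at h
    exact h
  have hlin : HasDerivAt (fun t : ℝ => A + (2 * t) • B) ((2 : ℝ) • B) 0 := by
    simpa using ((hasDerivAt_id (0 : ℝ)).const_mul 2).smul_const B |>.const_add A
  rw [hderiv, (hDfc.clm_apply hlin).deriv, hc0]
  simp

theorem exists_deriv_deriv_comp_quadratic_curve_neg {f : E → ℝ} (hf : ContDiff ℝ 2 f)
    (X A B : E) (hB : fderiv ℝ f X B ≠ 0) :
    ∃ s : ℝ, deriv (deriv fun t : ℝ => f (X + t • A + t ^ 2 • (s • B))) 0 < 0 := by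
  set C := fderiv ℝ (fderiv ℝ f) X A A
  refine ⟨-(C + 1) / (2 * fderiv ℝ f X B), ?_⟩
  rw [deriv_deriv_comp_quadratic_curve hf, map_smul, smul_eq_mul, smul_eq_mul]
  field_simp
  linarith

end QuadraticCurve

theorem Matrix.exists_mulVec_eq_zero_of_card_lt {K m n : Type*} [Field K] [Fintype m] [Fintype n]
    (A : Matrix m n K) (h : Fintype.card m < Fintype.card n) : ∃ v ≠ 0, A *ᵥ v = 0 := by
  obtain ⟨v, hv, hv0⟩ := Submodule.exists_mem_ne_zero_of_ne_bot
    (A.mulVecLin.ker_ne_bot_of_finrank_lt (by simpa using h))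
  exact ⟨v, hv0, hv⟩

theorem Matrix.add_smul_mul_add_smul_of_mul_eq_zero {R l m n : Type*} [CommRing R] [Fintype m]
    {W₁ M₁ : Matrix m n R} {W₂ M₂ : Matrix l m R} (h : W₂ * M₁ = 0) (t : R) :
    (W₂ + t • M₂) * (W₁ + t • M₁) = W₂ * W₁ + t • (M₂ * W₁) + t ^ 2 • (M₂ * M₁) := by
  simp only [Matrix.add_mul, Matrix.mul_add, Matrix.smul_mul, Matrix.mul_smul, h]
  module

theorem frobInner_single_one {a b : ℕ} (G : Matrix (Fin a) (Fin b) ℝ) (i : Fin a) (j : Fin b) :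
    frobInner G (Matrix.single i j 1) = G i j := by
  simp [frobInner, Matrix.single_apply, ite_and]

theorem stmt10_general {n k : ℕ} (hk : n < k)
    (f : Matrix (Fin n) (Fin n) ℝ → ℝ) (hf : ContDiff ℝ 2 f)
    (gradf : Matrix (Fin n) (Fin n) ℝ → Matrix (Fin n) (Fin n) ℝ)
    (hgradf : ∀ X H : Matrix (Fin n) (Fin n) ℝ,
      HasDerivAt (fun s : ℝ => f (X + s • H)) (frobInner (gradf X) H) 0)
    (W1 : Matrix (Fin k) (Fin n) ℝ) (W2 : Matrix (Fin n) (Fin k) ℝ)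
    (hnoncrit : gradf (W2 * W1) ≠ 0) :
    ∃ (M1 : Matrix (Fin k) (Fin n) ℝ) (M2 : Matrix (Fin n) (Fin k) ℝ),
      deriv (deriv (fun t : ℝ => f ((W2 + t • M2) * (W1 + t • M1)))) 0 < 0 := by
  obtain ⟨i, j, hij⟩ : ∃ i j, gradf (W2 * W1) i j ≠ 0 := by
    by_contra! h
    exact hnoncrit (Matrix.ext h)
  obtain ⟨v, hv0, hW2v⟩ := W2.exists_mulVec_eq_zero_of_card_lt (by simpa using hk)
  have hvv : v ⬝ᵥ v ≠ 0 := by simpa using hv0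
  set M2 := vecMulVec (Pi.single i 1) v
  set N1 := vecMulVec v (Pi.single j 1)
  obtain ⟨s, hs⟩ := exists_deriv_deriv_comp_quadratic_curve_neg hf (W2 * W1) (M2 * W1) (M2 * N1) (by
    rw [show M2 * N1 = (v ⬝ᵥ v) • single i j 1 by
        simp [M2, N1, vecMulVec_mul_vecMulVec, single_eq_single_vecMulVec_single],
      map_smul, ← (hf.differentiable two_ne_zero _).lineDeriv_eq_fderiv,
      HasLineDerivAt.lineDeriv (hgradf _ _), frobInner_single_one]
    exact smul_ne_zero hvv hij)
  have hW2N1 : W2 * (s • N1) = 0 := by simp [N1, mul_vecMulVec, hW2v]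
  refine ⟨s • N1, M2, ?_⟩
  simpa only [Matrix.add_smul_mul_add_smul_of_mul_eq_zero hW2N1, Matrix.mul_smul] using hs

/-- Let `f` be twice continuously differentiable with gradient `gradf` and
`g(W₁, W₂) = f(W₂ W₁)`.  If `(W₁, W₂)` is a critical point of `g` but `W₂ W₁` is not a
critical point of `f`, then `(W₁, W₂)` is a strict saddle of `g`: there is a direction
`(M₁, M₂)` in which the second derivative of `t ↦ g(W₁ + t M₁, W₂ + t M₂)` at `0` is
strictly negative. -/
theorem stmt10 {n k : ℕ} (hn : 1 ≤ n) (hk : n < k)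
    (f : Matrix (Fin n) (Fin n) ℝ → ℝ) (hf : ContDiff ℝ 2 f)
    (gradf : Matrix (Fin n) (Fin n) ℝ → Matrix (Fin n) (Fin n) ℝ)
    (hgradf : ∀ X H : Matrix (Fin n) (Fin n) ℝ,
      HasDerivAt (fun s : ℝ => f (X + s • H)) (frobInner (gradf X) H) 0)
    (W1 : Matrix (Fin k) (Fin n) ℝ) (W2 : Matrix (Fin n) (Fin k) ℝ)
    (hcrit1 : W2ᵀ * gradf (W2 * W1) = 0)
    (hcrit2 : gradf (W2 * W1) * W1ᵀ = 0)
    (hnoncrit : gradf (W2 * W1) ≠ 0) :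
    ∃ (M1 : Matrix (Fin k) (Fin n) ℝ) (M2 : Matrix (Fin n) (Fin k) ℝ),
      deriv (deriv (fun t : ℝ => f ((W2 + t • M2) * (W1 + t • M1)))) 0 < 0 :=
  stmt10_general hk f hf gradf hgradf W1 W2 hnoncrit
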